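/- arXiv:math/0002059 — 14 statements merged into one kernel-verified Lean document; each statement's English description precedes it below -/
import Mathlib

section
/- Let s₁, s₀, r₁, r₀, a₃, a₂, a₁, a₀ ∈ ℝ. Define f(v) = (s₀v + r₀)/(a₃v³ + a₂v² + a₁v + a₀) and g(v) = (s₁v + r₁)/(a₃v³ + a₂v² + a₁v + a₀). Let E, H, y : ℝ → ℝ and x₀ ∈ ℝ, and suppose: (i) a₃·y(x₀)³ + a₂·y(x₀)² + a₁·y(x₀) + a₀ ≠ 0 and (s₁x₀ + s₀)·y(x₀) + r₁x₀ + r₀ ≠ 0; (ii) E has derivative g(y(x₀))·E(y(x₀)) at y(x₀) and H has derivative E(y(x₀))·f(y(x₀)) at y(x₀); (iii) y has derivative −(a₃·y(x₀)³ + a₂·y(x₀)² + a₁·y(x₀) + a₀)/((s₁x₀ + s₀)·y(x₀) + r₁x₀ + r₀) at x₀ (i.e. y solves the AIL equation at x₀). Then the function Φ(x) = x·E(y(x)) + H(y(x)) has derivative 0 at x₀. Thus Φ is a first integral of the AIL class equation. -/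
/-! Along any curve `x ↦ (x, y x)`, the chain rule gives
`Φ' = E(y) · (1 + (x g(y) + f(y)) y')` once `E' = g E` and `H' = E f`. The AIL equation says precisely
that `y' = -1 / (x g(y) + f(y))`, since `x g(y) + f(y)` is the quotient of the denominator
`(s₁x + s₀)y + r₁x + r₀` by the cubic `a₃y³ + a₂y² + a₁y + a₀`, so the bracket vanishes. -/

theorem hasDerivAt_mul_comp_add_comp {E H y : ℝ → ℝ} {x₀ g f y' : ℝ}
    (hE : HasDerivAt E (g * E (y x₀)) (y x₀)) (hH : HasDerivAt H (E (y x₀) * f) (y x₀))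
    (hy : HasDerivAt y y' x₀) :
    HasDerivAt (fun x => x * E (y x) + H (y x)) (E (y x₀) * (1 + (x₀ * g + f) * y')) x₀ := by
  have hEy : HasDerivAt (fun x => E (y x)) (g * E (y x₀) * y') x₀ := hE.comp x₀ hy
  have hHy : HasDerivAt (fun x => H (y x)) (E (y x₀) * f * y') x₀ := hH.comp x₀ hy
  exact (((hasDerivAt_id' x₀).mul hEy).add hHy).congr_deriv (by ring)

theorem one_add_linear_mul_neg_div_eq_zero {P x₀ u v : ℝ} (hP : P ≠ 0) (hQ : x₀ * u + v ≠ 0) :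
    1 + (x₀ * (u / P) + v / P) * -(P / (x₀ * u + v)) = 0 := by
  field_simp
  ring

/-- `Φ(x) = x·E(y(x)) + H(y(x))` is a first integral of the AIL class equation
`y' = −(a₃y³ + a₂y² + a₁y + a₀)/((s₁x + s₀)y + r₁x + r₀)`, where
`f(v) = (s₀v + r₀)/(a₃v³ + a₂v² + a₁v + a₀)`,
`g(v) = (s₁v + r₁)/(a₃v³ + a₂v² + a₁v + a₀)`,
`E` is an integrating factor `exp(∫g)` and `H = ∫E·f`. -/
theorem AIL_first_integral
    (s₁ s₀ r₁ r₀ a₃ a₂ a₁ a₀ : ℝ)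
    (f g E H y : ℝ → ℝ) (x₀ : ℝ)
    (hf : f = fun v => (s₀ * v + r₀) / (a₃ * v ^ 3 + a₂ * v ^ 2 + a₁ * v + a₀))
    (hg : g = fun v => (s₁ * v + r₁) / (a₃ * v ^ 3 + a₂ * v ^ 2 + a₁ * v + a₀))
    (h1 : a₃ * (y x₀) ^ 3 + a₂ * (y x₀) ^ 2 + a₁ * (y x₀) + a₀ ≠ 0)
    (h2 : (s₁ * x₀ + s₀) * (y x₀) + r₁ * x₀ + r₀ ≠ 0)
    (hE : HasDerivAt E (g (y x₀) * E (y x₀)) (y x₀))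
    (hH : HasDerivAt H (E (y x₀) * f (y x₀)) (y x₀))
    (hy : HasDerivAt y
      (-((a₃ * (y x₀) ^ 3 + a₂ * (y x₀) ^ 2 + a₁ * (y x₀) + a₀) /
        ((s₁ * x₀ + s₀) * (y x₀) + r₁ * x₀ + r₀))) x₀) :
    HasDerivAt (fun x => x * E (y x) + H (y x)) 0 x₀ := by
  have hQ : (s₁ * x₀ + s₀) * y x₀ + r₁ * x₀ + r₀ = x₀ * (s₁ * y x₀ + r₁) + (s₀ * y x₀ + r₀) := by
    ring
  rw [hQ] at h2 hy
  subst hf hg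
  convert hasDerivAt_mul_comp_add_comp hE hH hy using 1
  rw [one_add_linear_mul_neg_div_eq_zero h1 h2, mul_zero]
end

section
/- Let λ, s₁, s₀, r₁, r₀, a₃, a₂, a₁, a₀ ∈ ℝ with λ ≠ 1, let t₀ > 0, set x₀ = t₀^(1/(1−λ)), and let y : ℝ → ℝ. Suppose (s₁x₀ + s₀·x₀^λ)·y(x₀) + r₁x₀ + r₀·x₀^λ ≠ 0 and y has derivative −(a₃y(x₀)³ + a₂y(x₀)² + a₁y(x₀) + a₀)/((s₁x₀ + s₀x₀^λ)y(x₀) + r₁x₀ + r₀x₀^λ) at x₀ (equation GTIB). Then the function v(t) = y(t^(1/(1−λ))) has derivative −(ã₃v(t₀)³ + ã₂v(t₀)² + ã₁v(t₀) + ã₀)/((s₁t₀ + s₀)v(t₀) + r₁t₀ + r₀) at t₀, where ãᵢ = aᵢ/(1−λ) for i = 0,1,2,3. Hence the equation GTIB is reduced by the change of variables x = t^(1/(1−λ)) to the AIL class representative with the constants redefined by aᵢ → (1−λ)aᵢ. -/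
/-!
Under `x = t ^ c` with `c = 1 / (1 - λ)` one has `x ^ λ = t ^ (c - 1)` and `x = x ^ λ · t`, so the
GTIB denominator is `x ^ λ` times the AIL denominator, while the chain rule multiplies `y'` by
`dx/dt = c · t ^ (c - 1) = c · x ^ λ`. The two factors `x ^ λ` cancel and `c` is absorbed
into the coefficients `aᵢ`.
-/

namespace Real

lemma rpow_rpow_eq_rpow_sub_one {t c lam : ℝ} (ht : 0 ≤ t) (hc : c * (1 - lam) = 1) :
    (t ^ c) ^ lam = t ^ (c - 1) := by
  rw [← rpow_mul ht]
  congr 1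
  linarith

lemma hasDerivAt_comp_rpow_of_hasDerivAt_neg_div {y : ℝ → ℝ} {A E c t x : ℝ} (ht : 0 < t)
    (hx : x = t ^ c) (hy : HasDerivAt y (-(A / (t ^ (c - 1) * E))) x) :
    HasDerivAt (fun s : ℝ => y (s ^ c)) (-(A * c / E)) t := by
  subst hx
  have hpow : HasDerivAt (fun s : ℝ => s ^ c) (c * t ^ (c - 1)) t :=
    hasDerivAt_rpow_const (Or.inl ht.ne')
  refine (hy.comp t hpow).congr_deriv ?_
  have hp : t ^ (c - 1) ≠ 0 := (rpow_pos_of_pos ht _).ne'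
  field_simp

end Real

theorem GTIB_reduces_to_AIL_general
    (lam s₁ s₀ r₁ r₀ a₃ a₂ a₁ a₀ : ℝ) (hlam : lam ≠ 1)
    (t₀ : ℝ) (ht₀ : 0 < t₀) (y : ℝ → ℝ) (x₀ : ℝ)
    (hx₀ : x₀ = t₀ ^ (1 / (1 - lam)))
    (hy : HasDerivAt y
      (-((a₃ * (y x₀) ^ 3 + a₂ * (y x₀) ^ 2 + a₁ * (y x₀) + a₀) /
        ((s₁ * x₀ + s₀ * x₀ ^ lam) * y x₀ + r₁ * x₀ + r₀ * x₀ ^ lam))) x₀) :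
    HasDerivAt (fun t : ℝ => y (t ^ (1 / (1 - lam))))
      (-(((a₃ / (1 - lam)) * (y x₀) ^ 3 + (a₂ / (1 - lam)) * (y x₀) ^ 2 +
          (a₁ / (1 - lam)) * (y x₀) + a₀ / (1 - lam)) /
        ((s₁ * t₀ + s₀) * y x₀ + r₁ * t₀ + r₀))) t₀ := by
  set c : ℝ := 1 / (1 - lam) with hc
  have hc_mul : c * (1 - lam) = 1 := one_div_mul_cancel (sub_ne_zero.mpr hlam.symm)
  have hx_lam : x₀ ^ lam = t₀ ^ (c - 1) := hx₀ ▸ Real.rpow_rpow_eq_rpow_sub_one ht₀.le hc_mul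
  have hx_eq : x₀ = t₀ ^ (c - 1) * t₀ := by
    rw [hx₀, ← Real.rpow_add_one ht₀.ne', sub_add_cancel]
  have hdenom : (s₁ * x₀ + s₀ * x₀ ^ lam) * y x₀ + r₁ * x₀ + r₀ * x₀ ^ lam
      = t₀ ^ (c - 1) * ((s₁ * t₀ + s₀) * y x₀ + r₁ * t₀ + r₀) := by
    rw [hx_lam]
    linear_combination (s₁ * y x₀ + r₁) * hx_eq
  rw [hdenom] at hy
  refine (Real.hasDerivAt_comp_rpow_of_hasDerivAt_neg_div ht₀ hx₀ hy).congr_deriv ?_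
  rw [hc]
  ring

/-- The equation GTIB, `y' = −(a₃y³ + a₂y² + a₁y + a₀)/((s₁x + s₀x^λ)y + r₁x + r₀x^λ)`,
is reduced by the change of variables `x = t^(1/(1−λ))` to the AIL class representative
with the constants redefined by `aᵢ → (1−λ)aᵢ`. -/
theorem GTIB_reduces_to_AIL
    (lam s₁ s₀ r₁ r₀ a₃ a₂ a₁ a₀ : ℝ) (hlam : lam ≠ 1)
    (t₀ : ℝ) (ht₀ : 0 < t₀) (y : ℝ → ℝ) (x₀ : ℝ)
    (hx₀ : x₀ = t₀ ^ (1 / (1 - lam)))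
    (hden : (s₁ * x₀ + s₀ * x₀ ^ lam) * y x₀ + r₁ * x₀ + r₀ * x₀ ^ lam ≠ 0)
    (hy : HasDerivAt y
      (-((a₃ * (y x₀) ^ 3 + a₂ * (y x₀) ^ 2 + a₁ * (y x₀) + a₀) /
        ((s₁ * x₀ + s₀ * x₀ ^ lam) * y x₀ + r₁ * x₀ + r₀ * x₀ ^ lam))) x₀) :
    HasDerivAt (fun t : ℝ => y (t ^ (1 / (1 - lam))))
      (-(((a₃ / (1 - lam)) * (y x₀) ^ 3 + (a₂ / (1 - lam)) * (y x₀) ^ 2 +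
          (a₁ / (1 - lam)) * (y x₀) + a₀ / (1 - lam)) /
        ((s₁ * t₀ + s₀) * y x₀ + r₁ * t₀ + r₀))) t₀ :=
  GTIB_reduces_to_AIL_general lam s₁ s₀ r₁ r₀ a₃ a₂ a₁ a₀ hlam t₀ ht₀ y x₀ hx₀ hy
end

section
/- Let a₃,a₂,a₁,a₀,b₃,b₂,b₁,b₀,s₃,s₂,s₁,s₀,r₃,r₂,r₁,r₀ ∈ ℝ and define G(x,y) = −((a₃x+b₃)y³ + (a₂x+b₂)y² + (a₁x+b₁)y + (a₀x+b₀))/((s₃x³+s₂x²+s₁x+s₀)y + r₃x³+r₂x²+r₁x+r₀). Then for all x, y ∈ ℝ such that (a₃x³+a₂x²+a₁x+a₀)y + b₃x³+b₂x²+b₁x+b₀ ≠ 0 and (s₃x+r₃)y³ + (s₂x+r₂)y² + (s₁x+r₁)y + (s₀x+r₀) ≠ 0, one has 1/G(y,x) = −((s₃x+r₃)y³ + (s₂x+r₂)y² + (s₁x+r₁)y + (s₀x+r₀))/((a₃x³+a₂x²+a₁x+a₀)y + b₃x³+b₂x²+b₁x+b₀). In other words, the inverse transformation {x ↔ y} carries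 the 16-parameter AIA equation y' = G(x,y) into an equation of exactly the same AIA type, with the parameter roles (aᵢ,bᵢ) and (sᵢ,rᵢ) interchanged. -/
/-- The inverse transformation `{x ↔ y}` carries the 16-parameter AIA equation
`y' = G(x,y)` into an equation of exactly the same AIA type, with the
parameter roles `(aᵢ,bᵢ)` and `(sᵢ,rᵢ)` interchanged:
`1/G(y,x)` equals the AIA right-hand side with the parameters swapped. -/
theorem AIA_inverse_is_AIA
    (a₃ a₂ a₁ a₀ b₃ b₂ b₁ b₀ s₃ s₂ s₁ s₀ r₃ r₂ r₁ r₀ : ℝ)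
    (G : ℝ → ℝ → ℝ)
    (hG : G = fun x y =>
      -(((a₃ * x + b₃) * y ^ 3 + (a₂ * x + b₂) * y ^ 2 + (a₁ * x + b₁) * y +
          (a₀ * x + b₀)) /
        ((s₃ * x ^ 3 + s₂ * x ^ 2 + s₁ * x + s₀) * y +
          (r₃ * x ^ 3 + r₂ * x ^ 2 + r₁ * x + r₀))))
    (x y : ℝ)
    (h1 : (a₃ * x ^ 3 + a₂ * x ^ 2 + a₁ * x + a₀) * y +
      (b₃ * x ^ 3 + b₂ * x ^ 2 + b₁ * x + b₀) ≠ 0)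
    (h2 : (s₃ * x + r₃) * y ^ 3 + (s₂ * x + r₂) * y ^ 2 + (s₁ * x + r₁) * y +
      (s₀ * x + r₀) ≠ 0) :
    1 / G y x =
      -(((s₃ * x + r₃) * y ^ 3 + (s₂ * x + r₂) * y ^ 2 + (s₁ * x + r₁) * y +
          (s₀ * x + r₀)) /
        ((a₃ * x ^ 3 + a₂ * x ^ 2 + a₁ * x + a₀) * y +
          (b₃ * x ^ 3 + b₂ * x ^ 2 + b₁ * x + b₀))) := by
  subst hG
  simp only
  rw [one_div, inv_neg, inv_div, ← neg_div]
  congr 1 <;> ring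
end

section
/- Let A, B, F, G, P, Q be polynomials in two variables X, Y over ℝ (elements of MvPolynomial (Fin 2) ℝ). Assume: (i) A and B have no common non-unit factor (every common divisor of A and B is a unit); (ii) G ≠ 0, the degree of F in Y is at most 3, the degree of G in Y is at most 1, and A·G = B·F (the Abel condition: A/B is cubic over linear in Y); (iii) Q ≠ 0, the degree of P in X is at most 1, the degree of Q in X is at most 3, and A·Q = B·P (the inverse-Abel condition: A/B is linear over cubic in X). Then the degree of A in Y is at most 3, the degree of B in Y is at most 1, the degree of A in X is at most 1, and the degree of B in X is at most 3; that is, A/B has the form of the right-hand side of the 16-parameter AIA equation. (This is the Proposition: if an Abel equation maps into another Abel equation under the inverse transformation {x ↔ y}, then both are of AIA form.) -/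
open MvPolynomial

private lemma degreeOf_zero_le_of_dvd {p q : MvPolynomial (Fin 2) ℝ}
    (hq : q ≠ 0) (h : p ∣ q) :
    MvPolynomial.degreeOf 0 p ≤ MvPolynomial.degreeOf 0 q := by
  have hd : (finSuccEquiv ℝ 1) p ∣ (finSuccEquiv ℝ 1) q := map_dvd _ h
  have hq' : (finSuccEquiv ℝ 1) q ≠ 0 := by
    simpa using hq
  have := Polynomial.natDegree_le_of_dvd hd hq'
  rwa [natDegree_finSuccEquiv, natDegree_finSuccEquiv] at this

private lemma degreeOf_le_of_dvd (i : Fin 2) {p q : MvPolynomial (Fin 2) ℝ}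
    (hq : q ≠ 0) (h : p ∣ q) :
    MvPolynomial.degreeOf i p ≤ MvPolynomial.degreeOf i q := by
  have hswap : Function.Injective (Equiv.swap i (0 : Fin 2)) := (Equiv.swap i 0).injective
  have hp := MvPolynomial.degreeOf_rename_of_injective (p := p) hswap i
  have hqr := MvPolynomial.degreeOf_rename_of_injective (p := q) hswap i
  rw [Equiv.swap_apply_left] at hp hqr
  rw [← hp, ← hqr]
  apply degreeOf_zero_le_of_dvd
  · exact fun hz => hq ((MvPolynomial.rename_injective _ hswap).eq_iff.mp
      (by simpa using hz))
  · exact (MvPolynomial.rename (Equiv.swap i 0)).toRingHom.map_dvd h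

/-- The Proposition: if an Abel equation maps into another Abel equation under the
inverse transformation `{x ↔ y}`, then both are of AIA form. Precisely, if `A/B`
(in lowest terms) is cubic over linear in `Y` (the Abel condition) and linear over
cubic in `X` (the inverse-Abel condition), then the numerator `A` is cubic in `Y`
and linear in `X`, and the denominator `B` is linear in `Y` and cubic in `X`.
Here `X` is the variable `0` and `Y` the variable `1` of `MvPolynomial (Fin 2) ℝ`. -/
theorem abel_and_inverse_abel_is_AIA
    (A B F G P Q : MvPolynomial (Fin 2) ℝ)
    (hcop : ∀ d : MvPolynomial (Fin 2) ℝ, d ∣ A → d ∣ B → IsUnit d)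
    (hG0 : G ≠ 0)
    (hFdeg : MvPolynomial.degreeOf 1 F ≤ 3)
    (hGdeg : MvPolynomial.degreeOf 1 G ≤ 1)
    (hAbel : A * G = B * F)
    (hQ0 : Q ≠ 0)
    (hPdeg : MvPolynomial.degreeOf 0 P ≤ 1)
    (hQdeg : MvPolynomial.degreeOf 0 Q ≤ 3)
    (hInvAbel : A * Q = B * P) :
    MvPolynomial.degreeOf 1 A ≤ 3 ∧ MvPolynomial.degreeOf 1 B ≤ 1 ∧
      MvPolynomial.degreeOf 0 A ≤ 1 ∧ MvPolynomial.degreeOf 0 B ≤ 3 := by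
  have hrel : IsRelPrime A B := hcop
  have hAF : A ∣ F := hrel.dvd_of_dvd_mul_left ⟨G, hAbel.symm⟩
  have hBG : B ∣ G := hrel.symm.dvd_of_dvd_mul_left ⟨F, by rw [← hAbel, mul_comm]⟩
  have hAP : A ∣ P := hrel.dvd_of_dvd_mul_left ⟨Q, hInvAbel.symm⟩
  have hBQ : B ∣ Q := hrel.symm.dvd_of_dvd_mul_left ⟨P, by rw [← hInvAbel, mul_comm]⟩
  refine ⟨?_, ?_, ?_, ?_⟩
  · by_cases hF : F = 0
    · have : A = 0 := by
        have := hAbel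
        rw [hF, mul_zero] at this
        exact (mul_eq_zero.mp this).resolve_right hG0
      simp [this]
    · exact le_trans (degreeOf_le_of_dvd 1 hF hAF) hFdeg
  · exact le_trans (degreeOf_le_of_dvd 1 hG0 hBG) hGdeg
  · by_cases hP : P = 0
    · have : A = 0 := by
        have := hInvAbel
        rw [hP, mul_zero] at this
        exact (mul_eq_zero.mp this).resolve_right hQ0
      simp [this]
    · exact le_trans (degreeOf_le_of_dvd 0 hP hAP) hPdeg
  · exact le_trans (degreeOf_le_of_dvd 0 hQ0 hBQ) hQdeg
end

section
/- Let s₁, s₀, r₁, r₀, a₃, a₂, a₁, a₀ ∈ ℝ with s₁ ≠ 0 and ω := r₁s₀ − r₀s₁ ≠ 0. Define k₀ = ((a₂r₀² + (s₀a₀ − a₁r₀)s₀)s₀ − a₃r₀³)s₁²/ω², k₁ = ((a₂s₁ − 3a₃r₁)r₀² + ((2r₁a₂ − 2a₁s₁)r₀ + (3a₀s₁ − a₁r₁)s₀)s₀)/ω², k₂ = (((2a₂s₁ − 3a₃r₁)r₁ − a₁s₁²)r₀ + (3s₁²a₀ + (r₁a₂ − 2a₁s₁)r₁)s₀)/(s₁²ω²),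 k₃ = (a₀s₁³ + ((a₂s₁ − a₃r₁)r₁ − a₁s₁²)r₁)/(s₁⁴ω²). Let y : ℝ → ℝ, t₀ ∈ ℝ, set x₀ = −t₀/s₁², Y = y(x₀), and suppose s₁·Y + r₁ ≠ 0, (s₁x₀ + s₀)Y + r₁x₀ + r₀ ≠ 0, and y has derivative −(a₃Y³ + a₂Y² + a₁Y + a₀)/((s₁x₀ + s₀)Y + r₁x₀ + r₀) at x₀. Define u(t) = −s₁²·(r₀ + s₀·y(−t/s₁²))/(s₁·y(−t/s₁²) + r₁). Then u(t₀) + t₀ ≠ 0 implies u has derivative (k₃u(t₀)³ + k₂u(t₀)² + k₁u(t₀) + k₀)/(u(t₀) + t₀) at t₀. Hence the 8-parameter AIL equation is transformed into the 4-parameter canonical form u' = (k₃u³ + k₂u² + k₁u + k₀)/(u + t). -/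
/-!
Both changes of variables are explicit: `x = -t/s₁²` is affine and `y ↦ u` is the Möbius map
`u = -s₁²(r₀ + s₀y)/(s₁y + r₁)` of determinant `-s₁²ω`, so by the chain rule
`u' = ω y' / (s₁y + r₁)²`. Substituting the equation for `y'`, the claim reduces to two
identities at the point: `u + t = -s₁² E/(s₁y + r₁)`, where `E = (s₁x + s₀)y + r₁x + r₀` is the
denominator of the AIL equation, and `k₃u³ + k₂u² + k₁u + k₀ = s₁²ω P(y)/(s₁y + r₁)³`, where
`P(y) = a₃y³ + a₂y² + a₁y + a₀`; the second is how the `kᵢ` are chosen.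
-/

theorem HasDerivAt.const_mul_affine_div_affine {f : ℝ → ℝ} {f' x : ℝ} (κ α β γ δ : ℝ)
    (hf : HasDerivAt f f' x) (hx : γ * f x + δ ≠ 0) :
    HasDerivAt (fun t => κ * (β + α * f t) / (γ * f t + δ))
      (κ * (α * δ - β * γ) * f' / (γ * f x + δ) ^ 2) x :=
  ((((hf.const_mul α).const_add β).const_mul κ).fun_div
    ((hf.const_mul γ).add_const δ) hx).congr_deriv (by ring)

section AIL

variable {s₁ s₀ r₁ r₀ a₃ a₂ a₁ a₀ ω k₀ k₁ k₂ k₃ : ℝ}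

theorem AIL_mobius_add_time (Y t : ℝ) (hs₁ : s₁ ≠ 0) (hd : s₁ * Y + r₁ ≠ 0) :
    -s₁ ^ 2 * (r₀ + s₀ * Y) / (s₁ * Y + r₁) + t =
      -s₁ ^ 2 * ((s₁ * (-t / s₁ ^ 2) + s₀) * Y + r₁ * (-t / s₁ ^ 2) + r₀) / (s₁ * Y + r₁) := by
  field_simp
  ring

theorem AIL_cubic_at_mobius (Y : ℝ)
    (hs₁ : s₁ ≠ 0) (hω : ω = r₁ * s₀ - r₀ * s₁) (hω0 : ω ≠ 0) (hd : s₁ * Y + r₁ ≠ 0)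
    (hk₀ : k₀ = ((a₂ * r₀ ^ 2 + (s₀ * a₀ - a₁ * r₀) * s₀) * s₀ - a₃ * r₀ ^ 3) * s₁ ^ 2 / ω ^ 2)
    (hk₁ : k₁ = ((a₂ * s₁ - 3 * a₃ * r₁) * r₀ ^ 2 +
      ((2 * r₁ * a₂ - 2 * a₁ * s₁) * r₀ + (3 * a₀ * s₁ - a₁ * r₁) * s₀) * s₀) / ω ^ 2)
    (hk₂ : k₂ = (((2 * a₂ * s₁ - 3 * a₃ * r₁) * r₁ - a₁ * s₁ ^ 2) * r₀ +
      (3 * s₁ ^ 2 * a₀ + (r₁ * a₂ - 2 * a₁ * s₁) * r₁) * s₀) / (s₁ ^ 2 * ω ^ 2))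
    (hk₃ : k₃ = (a₀ * s₁ ^ 3 + ((a₂ * s₁ - a₃ * r₁) * r₁ - a₁ * s₁ ^ 2) * r₁) / (s₁ ^ 4 * ω ^ 2)) :
    k₃ * (-s₁ ^ 2 * (r₀ + s₀ * Y) / (s₁ * Y + r₁)) ^ 3 +
        k₂ * (-s₁ ^ 2 * (r₀ + s₀ * Y) / (s₁ * Y + r₁)) ^ 2 +
        k₁ * (-s₁ ^ 2 * (r₀ + s₀ * Y) / (s₁ * Y + r₁)) + k₀ =
      s₁ ^ 2 * ω * (a₃ * Y ^ 3 + a₂ * Y ^ 2 + a₁ * Y + a₀) / (s₁ * Y + r₁) ^ 3 := by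
  rw [hk₀, hk₁, hk₂, hk₃]
  field_simp
  rw [hω]
  ring

end AIL

theorem AIL8_to_AIL4_general
    (s₁ s₀ r₁ r₀ a₃ a₂ a₁ a₀ ω k₀ k₁ k₂ k₃ : ℝ)
    (hs₁ : s₁ ≠ 0) (hω : ω = r₁ * s₀ - r₀ * s₁) (hω0 : ω ≠ 0)
    (hk₀ : k₀ = ((a₂ * r₀ ^ 2 + (s₀ * a₀ - a₁ * r₀) * s₀) * s₀ - a₃ * r₀ ^ 3) * s₁ ^ 2 / ω ^ 2)
    (hk₁ : k₁ = ((a₂ * s₁ - 3 * a₃ * r₁) * r₀ ^ 2 +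
      ((2 * r₁ * a₂ - 2 * a₁ * s₁) * r₀ + (3 * a₀ * s₁ - a₁ * r₁) * s₀) * s₀) / ω ^ 2)
    (hk₂ : k₂ = (((2 * a₂ * s₁ - 3 * a₃ * r₁) * r₁ - a₁ * s₁ ^ 2) * r₀ +
      (3 * s₁ ^ 2 * a₀ + (r₁ * a₂ - 2 * a₁ * s₁) * r₁) * s₀) / (s₁ ^ 2 * ω ^ 2))
    (hk₃ : k₃ = (a₀ * s₁ ^ 3 + ((a₂ * s₁ - a₃ * r₁) * r₁ - a₁ * s₁ ^ 2) * r₁) / (s₁ ^ 4 * ω ^ 2))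
    (y : ℝ → ℝ) (t₀ x₀ Y : ℝ)
    (hx₀ : x₀ = -t₀ / s₁ ^ 2) (hY : Y = y x₀)
    (h1 : s₁ * Y + r₁ ≠ 0)
    (h2 : (s₁ * x₀ + s₀) * Y + r₁ * x₀ + r₀ ≠ 0)
    (hy : HasDerivAt y
      (-((a₃ * Y ^ 3 + a₂ * Y ^ 2 + a₁ * Y + a₀) /
        ((s₁ * x₀ + s₀) * Y + r₁ * x₀ + r₀))) x₀)
    (u : ℝ → ℝ)
    (hu : u = fun t => -s₁ ^ 2 * (r₀ + s₀ * y (-t / s₁ ^ 2)) / (s₁ * y (-t / s₁ ^ 2) + r₁)) :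
    HasDerivAt u
      ((k₃ * (u t₀) ^ 3 + k₂ * (u t₀) ^ 2 + k₁ * (u t₀) + k₀) / (u t₀ + t₀)) t₀ := by
  subst hu hx₀
  have hv : HasDerivAt (fun t => y (-t / s₁ ^ 2)) _ t₀ :=
    hy.comp t₀ ((hasDerivAt_neg t₀).div_const (s₁ ^ 2))
  beta_reduce
  rw [← hY]
  refine (hv.const_mul_affine_div_affine (-s₁ ^ 2) s₀ r₀ s₁ r₁ (hY ▸ h1)).congr_deriv ?_
  rw [← hY, AIL_cubic_at_mobius Y hs₁ hω hω0 h1 hk₀ hk₁ hk₂ hk₃, AIL_mobius_add_time Y t₀ hs₁ h1,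
    hω]
  field_simp

/-- The 8-parameter AIL equation
`y' = −(a₃y³ + a₂y² + a₁y + a₀)/((s₁x + s₀)y + r₁x + r₀)`
is transformed, by the change of variables `{x = −t/s₁², u = −s₁²(r₀ + s₀y)/(s₁y + r₁)}`
and the stated redefinition of the parameters `k₀, k₁, k₂, k₃`, into the 4-parameter
canonical form `u' = (k₃u³ + k₂u² + k₁u + k₀)/(u + t)`. -/
theorem AIL8_to_AIL4
    (s₁ s₀ r₁ r₀ a₃ a₂ a₁ a₀ ω k₀ k₁ k₂ k₃ : ℝ)
    (hs₁ : s₁ ≠ 0) (hω : ω = r₁ * s₀ - r₀ * s₁) (hω0 : ω ≠ 0)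
    (hk₀ : k₀ = ((a₂ * r₀ ^ 2 + (s₀ * a₀ - a₁ * r₀) * s₀) * s₀ - a₃ * r₀ ^ 3) * s₁ ^ 2 / ω ^ 2)
    (hk₁ : k₁ = ((a₂ * s₁ - 3 * a₃ * r₁) * r₀ ^ 2 +
      ((2 * r₁ * a₂ - 2 * a₁ * s₁) * r₀ + (3 * a₀ * s₁ - a₁ * r₁) * s₀) * s₀) / ω ^ 2)
    (hk₂ : k₂ = (((2 * a₂ * s₁ - 3 * a₃ * r₁) * r₁ - a₁ * s₁ ^ 2) * r₀ +
      (3 * s₁ ^ 2 * a₀ + (r₁ * a₂ - 2 * a₁ * s₁) * r₁) * s₀) / (s₁ ^ 2 * ω ^ 2))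
    (hk₃ : k₃ = (a₀ * s₁ ^ 3 + ((a₂ * s₁ - a₃ * r₁) * r₁ - a₁ * s₁ ^ 2) * r₁) / (s₁ ^ 4 * ω ^ 2))
    (y : ℝ → ℝ) (t₀ x₀ Y : ℝ)
    (hx₀ : x₀ = -t₀ / s₁ ^ 2) (hY : Y = y x₀)
    (h1 : s₁ * Y + r₁ ≠ 0)
    (h2 : (s₁ * x₀ + s₀) * Y + r₁ * x₀ + r₀ ≠ 0)
    (hy : HasDerivAt y
      (-((a₃ * Y ^ 3 + a₂ * Y ^ 2 + a₁ * Y + a₀) /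
        ((s₁ * x₀ + s₀) * Y + r₁ * x₀ + r₀))) x₀)
    (u : ℝ → ℝ)
    (hu : u = fun t => -s₁ ^ 2 * (r₀ + s₀ * y (-t / s₁ ^ 2)) / (s₁ * y (-t / s₁ ^ 2) + r₁))
    (hden : u t₀ + t₀ ≠ 0) :
    HasDerivAt u
      ((k₃ * (u t₀) ^ 3 + k₂ * (u t₀) ^ 2 + k₁ * (u t₀) + k₀) / (u t₀ + t₀)) t₀ :=
  AIL8_to_AIL4_general s₁ s₀ r₁ r₀ a₃ a₂ a₁ a₀ ω k₀ k₁ k₂ k₃ hs₁ hω hω0 hk₀ hk₁ hk₂ hk₃ y t₀ x₀ Y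
    hx₀ hY h1 h2 hy u hu
end

section
/- Let k₃, k₂, k₁, k₀ ∈ ℝ, let u : ℝ → ℝ and t₀ ∈ ℝ with u(t₀) ≠ 0. Suppose u has derivative (k₃t₀³ − k₂t₀² + k₁t₀ − k₀)·u(t₀)³ − (3k₃t₀² − 2k₂t₀ + k₁ + 1)·u(t₀)² + (3k₃t₀ − k₂)·u(t₀) − k₃ at t₀ (the first-kind form AIL_FirstKind). Define y(t) = 1/u(t) − t. Then y(t₀) + t₀ ≠ 0 and y has derivative (k₃·y(t₀)³ + k₂·y(t₀)² + k₁·y(t₀) + k₀)/(y(t₀) + t₀) at t₀. Thus the change of variables {x = t, y = 1/u − t} carries the first-kind representative AIL_FirstKind into the second-kind canonical AIL representative y' = (k₃y³ + k₂y² + k₁y + k₀)/(y + x). -/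
/-!
Along a solution, `y + x = 1/u`, so dividing by `y + x` is multiplying by `u`; the chain rule gives
`y' = -u'/u² - 1`, and substituting `y = 1/u - x` into the second-kind right-hand side turns it,
after clearing the powers of `u`, into exactly this expression of the first-kind right-hand side.
-/

section

variable {𝕜 : Type*}

def ailFirstKind [Field 𝕜] (k₃ k₂ k₁ k₀ x u : 𝕜) : 𝕜 :=
  (k₃ * x ^ 3 - k₂ * x ^ 2 + k₁ * x - k₀) * u ^ 3 - (3 * k₃ * x ^ 2 - 2 * k₂ * x + k₁ + 1) * u ^ 2 +
    (3 * k₃ * x - k₂) * u - k₃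

def ailSecondKind [Field 𝕜] (k₃ k₂ k₁ k₀ x y : 𝕜) : 𝕜 :=
  (k₃ * y ^ 3 + k₂ * y ^ 2 + k₁ * y + k₀) / (y + x)

theorem ailSecondKind_one_div_sub [Field 𝕜] (k₃ k₂ k₁ k₀ x : 𝕜) {u : 𝕜} (hu : u ≠ 0) :
    ailSecondKind k₃ k₂ k₁ k₀ x (1 / u - x) = -ailFirstKind k₃ k₂ k₁ k₀ x u / u ^ 2 - 1 := by
  rw [ailSecondKind, ailFirstKind, sub_add_cancel]
  field_simp
  ring

theorem HasDerivAt.one_div_sub_id [NontriviallyNormedField 𝕜] {u : 𝕜 → 𝕜} {u' t : 𝕜}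
    (hu : HasDerivAt u u' t) (h : u t ≠ 0) :
    HasDerivAt (fun s => 1 / u s - s) (-u' / u t ^ 2 - 1) t := by
  simpa only [one_div] using (hu.fun_inv h).fun_sub (hasDerivAt_id' t)

end

/-- The change of variables `{x = t, y = 1/u − t}` carries the first-kind representative
`u' = (k₃x³ − k₂x² + k₁x − k₀)u³ − (3k₃x² − 2k₂x + k₁ + 1)u² + (3k₃x − k₂)u − k₃`
into the second-kind canonical AIL representative
`y' = (k₃y³ + k₂y² + k₁y + k₀)/(y + x)`. -/
theorem AIL_firstKind_to_secondKind
    (k₃ k₂ k₁ k₀ : ℝ) (u : ℝ → ℝ) (t₀ : ℝ) (hu0 : u t₀ ≠ 0)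
    (hu : HasDerivAt u
      ((k₃ * t₀ ^ 3 - k₂ * t₀ ^ 2 + k₁ * t₀ - k₀) * (u t₀) ^ 3 -
        (3 * k₃ * t₀ ^ 2 - 2 * k₂ * t₀ + k₁ + 1) * (u t₀) ^ 2 +
        (3 * k₃ * t₀ - k₂) * (u t₀) - k₃) t₀)
    (y : ℝ → ℝ) (hy : y = fun t => 1 / u t - t) :
    y t₀ + t₀ ≠ 0 ∧
      HasDerivAt y
        ((k₃ * (y t₀) ^ 3 + k₂ * (y t₀) ^ 2 + k₁ * (y t₀) + k₀) / (y t₀ + t₀)) t₀ := by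
  subst hy
  refine ⟨by simpa using hu0, ?_⟩
  have hu' : HasDerivAt u (ailFirstKind k₃ k₂ k₁ k₀ t₀ (u t₀)) t₀ := hu
  have hy' := hu'.one_div_sub_id hu0
  rw [← ailSecondKind_one_div_sub k₃ k₂ k₁ k₀ t₀ hu0] at hy'
  exact hy'
end

section
/- Let k₂, k₁, k₀ ∈ ℝ with k₂ ≠ 0, and set α = k₂k₀ − k₁²/4. Let y : ℝ → ℝ and t₀ ∈ ℝ; set X(t) = (k₁ − 2t)/(2k₂) and x₀ = X(t₀), Y = y(x₀). Suppose Y + x₀ ≠ 0 and y has derivative (k₂Y² + k₁Y + k₀)/(Y + x₀) at x₀. Define u(t) = −1/(k₂·(y(X(t)) + X(t))). Then u has derivative (α + t₀²)·u(t₀)³ − (2t₀ + 1)·u(t₀)² + u(t₀) at t₀. Hence in the case k₃ = 0, k₂ ≠ 0 the canonical AIL equation reduces to the 1-parameter representative u' = (α + x²)u³ − (2x + 1)u² + u. -/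
/-! With `w = y ∘ X + X`, the chain rule gives `w' = -(y'(x₀) + 1)/k₂` and hence
`u' = k₂ w' u² = -(y'(x₀) + 1) u²`. Writing `Y + x₀ = -1/(k₂ u)` and `k₁ = 2 k₂ x₀ + 2 t₀`,
the right-hand side `(k₂Y² + k₁Y + k₀)/(Y + x₀)` becomes rational in `u` and `t₀`, and the
claimed formula is then a field identity in which `k₂k₀ - k₁²/4` appears by completing the square. -/

theorem hasDerivAt_neg_one_div_const_mul {w : ℝ → ℝ} {w' t : ℝ} (k : ℝ)
    (hw : HasDerivAt w w' t) (hw0 : w t ≠ 0) :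
    HasDerivAt (fun s => -1 / (k * w s)) (k * w' * (-1 / (k * w t)) ^ 2) t := by
  have hfun : (fun s => -1 / (k * w s)) = fun s => -k⁻¹ * (w s)⁻¹ := by
    funext s
    rw [div_eq_mul_inv, mul_inv]
    ring
  rw [hfun]
  refine ((hw.inv hw0).const_mul (-k⁻¹)).congr_deriv ?_
  rcases eq_or_ne k 0 with rfl | hk
  · simp
  · field_simp

theorem hasDerivAt_sub_two_mul_div_two_mul (k₁ k₂ t : ℝ) :
    HasDerivAt (fun s => (k₁ - 2 * s) / (2 * k₂)) (-1 / k₂) t := by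
  refine ((((hasDerivAt_id t).const_mul 2).const_sub k₁).div_const (2 * k₂)).congr_deriv ?_
  rw [mul_one, neg_div, neg_div, div_mul_cancel_left₀ two_ne_zero, one_div]

theorem ail_substituted_rhs_eq {k₂ k₁ k₀ t x Y u : ℝ} (hk₂ : k₂ ≠ 0) (hYx : Y + x ≠ 0)
    (hx : x = (k₁ - 2 * t) / (2 * k₂)) (hu : u = -1 / (k₂ * (Y + x))) :
    k₂ * ((k₂ * Y ^ 2 + k₁ * Y + k₀) / (Y + x) * (-1 / k₂) + -1 / k₂) * u ^ 2 =
      (k₂ * k₀ - k₁ ^ 2 / 4 + t ^ 2) * u ^ 3 - (2 * t + 1) * u ^ 2 + u := by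
  obtain rfl : k₁ = 2 * k₂ * x + 2 * t := by rw [hx]; field_simp; ring
  subst hu
  field_simp
  ring

/-- In the case `k₃ = 0, k₂ ≠ 0`, the canonical AIL equation
`y' = (k₂y² + k₁y + k₀)/(y + x)` reduces, by the change of variables
`{x = (k₁ − 2t)/(2k₂), u = −1/(k₂(y + x))}` and the new parameter
`α = k₂k₀ − k₁²/4`, to the 1-parameter representative
`u' = (α + x²)u³ − (2x + 1)u² + u`. -/
theorem AIL4_case_k3_eq_zero
    (k₂ k₁ k₀ : ℝ) (hk₂ : k₂ ≠ 0) (α : ℝ) (hα : α = k₂ * k₀ - k₁ ^ 2 / 4)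
    (y : ℝ → ℝ) (t₀ : ℝ) (X : ℝ → ℝ)
    (hX : X = fun t => (k₁ - 2 * t) / (2 * k₂))
    (x₀ Y : ℝ) (hx₀ : x₀ = X t₀) (hY : Y = y x₀)
    (h1 : Y + x₀ ≠ 0)
    (hy : HasDerivAt y ((k₂ * Y ^ 2 + k₁ * Y + k₀) / (Y + x₀)) x₀)
    (u : ℝ → ℝ) (hu : u = fun t => -1 / (k₂ * (y (X t) + X t))) :
    HasDerivAt u
      ((α + t₀ ^ 2) * (u t₀) ^ 3 - (2 * t₀ + 1) * (u t₀) ^ 2 + u t₀) t₀ := by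
  subst hα hu hY hx₀
  have hXd : HasDerivAt X (-1 / k₂) t₀ := hX ▸ hasDerivAt_sub_two_mul_div_two_mul k₁ k₂ t₀
  refine (hasDerivAt_neg_one_div_const_mul k₂ ((hy.comp t₀ hXd).add hXd) h1).congr_deriv ?_
  exact ail_substituted_rhs_eq hk₂ h1 (by rw [hX]) rfl
end

section
/- Let α ∈ ℝ, let y : ℝ → ℝ, let t₀ ≠ 0, and set x₀ = t₀²/2, Y = y(x₀). Suppose y has derivative (2α·x₀³ + x₀² + x₀/2)·Y³ − (6α·x₀² + 2x₀ + 3/2)·Y² + (6α·x₀ + 1)·Y − 2α at x₀ — that is, y solves the first-kind AIL representative with k₃ = 2α, k₂ = −1, k₁ = 1/2, k₀ = 0. Define u(t) = t³·y(t²/2)/2 − t. Then u has derivative (α·t₀ + 1/t₀ + 1/t₀³)·u(t₀)³ + u(t₀)² at t₀. Hence Abel's parameterized Class A equation y' = (αx + 1/x + 1/x³)y³ + y² is a member of the AIL class. -/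
/-!
Along `x = t²/2` the chain rule turns `u = t³ y(t²/2)/2 − t` into
`u' = (3t² Y + t⁴ y'(x))/2 − 1` with `Y = y(x)`. Substituting the AIL right-hand side for `y'(x)`
and `Y = 2(u + t)/t³` makes this a polynomial identity in `t, 1/t, u`, which is exactly the
Class A right-hand side.
-/

def ailFirstKindRHS (k₃ k₂ k₁ k₀ x u : ℝ) : ℝ :=
  (k₃ * x ^ 3 - k₂ * x ^ 2 + k₁ * x - k₀) * u ^ 3 - (3 * k₃ * x ^ 2 - 2 * k₂ * x + k₁ + 1) * u ^ 2 +
    (3 * k₃ * x - k₂) * u - k₃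

noncomputable def classARHS (α x y : ℝ) : ℝ :=
  (α * x + 1 / x + 1 / x ^ 3) * y ^ 3 + y ^ 2

theorem HasDerivAt.cube_mul_comp_half_sq_div_two_sub {y : ℝ → ℝ} {y' t : ℝ}
    (hy : HasDerivAt y y' (t ^ 2 / 2)) :
    HasDerivAt (fun s => s ^ 3 * y (s ^ 2 / 2) / 2 - s)
      ((3 * t ^ 2 * y (t ^ 2 / 2) + t ^ 4 * y') / 2 - 1) t := by
  have hx : HasDerivAt (fun s : ℝ => s ^ 2 / 2) t t := by
    simpa using (hasDerivAt_pow 2 t).div_const 2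
  have hyx : HasDerivAt (fun s => y (s ^ 2 / 2)) (y' * t) t := hy.comp t hx
  have hu : HasDerivAt (fun s => s ^ 3 * y (s ^ 2 / 2) / 2 - s)
      ((((3 : ℕ) : ℝ) * t ^ (3 - 1) * y (t ^ 2 / 2) + t ^ 3 * (y' * t)) / 2 - 1) t :=
    (((hasDerivAt_pow 3 t).mul hyx).div_const 2).sub (hasDerivAt_id' t)
  convert hu using 1
  push_cast
  ring

theorem ailFirstKindRHS_change_of_variables_eq_classARHS (α : ℝ) {t : ℝ} (ht : t ≠ 0) (Y : ℝ) :
    (3 * t ^ 2 * Y + t ^ 4 * ailFirstKindRHS (2 * α) (-1) (1 / 2) 0 (t ^ 2 / 2) Y) / 2 - 1 =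
      classARHS α t (t ^ 3 * Y / 2 - t) := by
  unfold ailFirstKindRHS classARHS
  field_simp
  ring

/-- Abel's parameterized Class A equation `y' = (αx + 1/x + 1/x³)y³ + y²` is a member
of the AIL class: it is obtained from the first-kind AIL representative with
`k₃ = 2α, k₂ = −1, k₁ = 1/2, k₀ = 0` by the change of variables
`{x = t²/2, y = 2(u + t)/t³}`, i.e. `u = t³·y(t²/2)/2 − t`. -/
theorem classA_member_of_AIL
    (α : ℝ) (y : ℝ → ℝ) (t₀ : ℝ) (ht₀ : t₀ ≠ 0)
    (x₀ Y : ℝ) (hx₀ : x₀ = t₀ ^ 2 / 2) (hY : Y = y x₀)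
    (hy : HasDerivAt y
      ((2 * α * x₀ ^ 3 + x₀ ^ 2 + x₀ / 2) * Y ^ 3 -
        (6 * α * x₀ ^ 2 + 2 * x₀ + 3 / 2) * Y ^ 2 +
        (6 * α * x₀ + 1) * Y - 2 * α) x₀)
    (u : ℝ → ℝ) (hu : u = fun t => t ^ 3 * y (t ^ 2 / 2) / 2 - t) :
    HasDerivAt u
      ((α * t₀ + 1 / t₀ + 1 / t₀ ^ 3) * (u t₀) ^ 3 + (u t₀) ^ 2) t₀ := by
  subst hx₀ hY hu
  have hAIL : HasDerivAt y (ailFirstKindRHS (2 * α) (-1) (1 / 2) 0 (t₀ ^ 2 / 2) (y (t₀ ^ 2 / 2)))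
      (t₀ ^ 2 / 2) := by
    convert hy using 1
    unfold ailFirstKindRHS
    ring
  have hu := hAIL.cube_mul_comp_half_sq_div_two_sub
  rwa [ailFirstKindRHS_change_of_variables_eq_classARHS α ht₀] at hu
end

section
/- Let α ∈ ℝ, let y : ℝ → ℝ, and let t₀ ∈ ℝ with y(t₀) + t₀² ≠ 0. Suppose y has derivative (2·y(t₀) + 2α)/(y(t₀) + t₀²) at t₀ — that is, y solves the AIR equation with parameters s₂ = 0, s₁ = 0, s₀ = 1, r₂ = 1, r₁ = 0, r₀ = 0, a₃ = 0, a₂ = 0, a₁ = −2, a₀ = −2α. Define u(t) = −1/(y(t) + t²). Then u has derivative 2(t₀² − α)·u(t₀)³ + 2(t₀ + 1)·u(t₀)² at t₀. Hence Liouville's parameterized Class B equation y' = 2(x² − α)y³ + 2(x + 1)y² is a member of the AIR class. -/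
/-! With `v = y + t²` we have `u = -1/v`, so `u' = v' u²`; since `1/v = -u`, the AIR equation for
`y` turns `v' = (2y + 2α)/v + 2t` into a polynomial in `u` and `t`, and `v' u²` is the Class B
right-hand side. -/

theorem HasDerivAt.neg_one_div {𝕜 : Type*} [NontriviallyNormedField 𝕜] {v : 𝕜 → 𝕜} {v' t : 𝕜}
    (hv : HasDerivAt v v' t) (ht : v t ≠ 0) :
    HasDerivAt (fun s => -1 / v s) (v' * (-1 / v t) ^ 2) t := by
  refine ((hasDerivAt_const t (-1 : 𝕜)).fun_div hv ht).congr_deriv ?_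
  field_simp
  ring

/-- Liouville's parameterized Class B equation `y' = 2(x² − α)y³ + 2(x + 1)y²`
is a member of the AIR class: it is obtained from the AIR equation with parameters
`s₂ = 0, s₁ = 0, s₀ = 1, r₂ = 1, r₁ = 0, r₀ = 0, a₃ = 0, a₂ = 0, a₁ = −2, a₀ = −2α`
by the change of variables `{x = t, y = −1/u − t²}`, i.e. `u = −1/(y + t²)`. -/
theorem classB_member_of_AIR
    (α : ℝ) (y : ℝ → ℝ) (t₀ : ℝ)
    (hden : y t₀ + t₀ ^ 2 ≠ 0)
    (hy : HasDerivAt y ((2 * y t₀ + 2 * α) / (y t₀ + t₀ ^ 2)) t₀)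
    (u : ℝ → ℝ) (hu : u = fun t => -1 / (y t + t ^ 2)) :
    HasDerivAt u
      (2 * (t₀ ^ 2 - α) * (u t₀) ^ 3 + 2 * (t₀ + 1) * (u t₀) ^ 2) t₀ := by
  have hv : HasDerivAt (fun t => y t + t ^ 2)
      ((2 * y t₀ + 2 * α) / (y t₀ + t₀ ^ 2) + 2 * t₀) t₀ := by
    simpa using hy.fun_add (hasDerivAt_pow 2 t₀)
  subst hu
  refine (hv.neg_one_div hden).congr_deriv ?_
  field_simp
  ring
end

section
/- Let α ∈ ℝ, let y : ℝ → ℝ, and let t₀ ≠ 0 with t₀·y(t₀) + t₀² − α ≠ 0. Suppose y has derivative 1/(t₀·y(t₀) + t₀² − α) at t₀ — that is, y solves the AIR equation with parameters s₂ = 0, s₁ = 1, s₀ = 0, r₂ = 1, r₁ = 0, r₀ = −α, a₃ = a₂ = a₁ = 0, a₀ = −1. Define u(t) = 1/(y(t) − (α − t²)/t). Then u has derivative −u(t₀)³/t₀ − (α + t₀²)·u(t₀)²/t₀² at t₀. Hence Appell's parameterized Class D equation y' = −y³/x − (α + x²)y²/x² is a member of the AIR class. -/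
/-!
Write `D = t₀ y(t₀) + t₀² − α`. Then `y − (α − t²)/t` equals `D/t₀` at `t₀`, so `u(t₀) = t₀/D`,
and the quotient rule gives `u'(t₀) = −(1/D + 1 + α/t₀²) · t₀²/D²`, which is exactly the
Class D right-hand side `−t₀²/D³ − (α + t₀²)/D²` evaluated at `u(t₀) = t₀/D`.
-/

theorem hasDerivAt_sub_sq_div_self (α : ℝ) {t : ℝ} (ht : t ≠ 0) :
    HasDerivAt (fun s : ℝ => (α - s ^ 2) / s) (-1 - α / t ^ 2) t := by
  have hnum : HasDerivAt (fun s : ℝ => α - s ^ 2) (-(2 * t)) t := by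
    simpa using (hasDerivAt_pow 2 t).const_sub α
  refine (hnum.div (hasDerivAt_id' t) ht).congr_deriv ?_
  field_simp
  ring

theorem sub_sub_sq_div_eq (α y : ℝ) {t : ℝ} (ht : t ≠ 0) :
    y - (α - t ^ 2) / t = (t * y + t ^ 2 - α) / t := by
  field_simp
  ring

theorem classD_rhs_eq (α : ℝ) {t D : ℝ} (ht : t ≠ 0) (hD : D ≠ 0) :
    -(1 / D - (-1 - α / t ^ 2)) / (D / t) ^ 2 =
      -(t / D) ^ 3 / t - (α + t ^ 2) * (t / D) ^ 2 / t ^ 2 := by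
  field_simp
  ring

/-- Appell's parameterized Class D equation `y' = −y³/x − (α + x²)y²/x²` is a member
of the AIR class: it is obtained from the AIR equation with parameters
`s₂ = 0, s₁ = 1, s₀ = 0, r₂ = 1, r₁ = 0, r₀ = −α, a₃ = a₂ = a₁ = 0, a₀ = −1`
by the change of variables `{x = t, y = 1/u + (α − t²)/t}`, i.e.
`u = 1/(y − (α − t²)/t)`. -/
theorem classD_member_of_AIR
    (α : ℝ) (y : ℝ → ℝ) (t₀ : ℝ) (ht₀ : t₀ ≠ 0)
    (hden : t₀ * y t₀ + t₀ ^ 2 - α ≠ 0)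
    (hy : HasDerivAt y (1 / (t₀ * y t₀ + t₀ ^ 2 - α)) t₀)
    (u : ℝ → ℝ) (hu : u = fun t => 1 / (y t - (α - t ^ 2) / t)) :
    HasDerivAt u
      (-(u t₀) ^ 3 / t₀ - (α + t₀ ^ 2) * (u t₀) ^ 2 / t₀ ^ 2) t₀ := by
  set D := t₀ * y t₀ + t₀ ^ 2 - α
  have hv : HasDerivAt (fun t => y t - (α - t ^ 2) / t) (1 / D - (-1 - α / t₀ ^ 2)) t₀ :=
    hy.sub (hasDerivAt_sub_sq_div_self α ht₀)
  have hv₀ : y t₀ - (α - t₀ ^ 2) / t₀ = D / t₀ := sub_sub_sq_div_eq α (y t₀) ht₀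
  have hu₀ : u t₀ = t₀ / D := by
    rw [hu]
    simp only [hv₀, one_div_div]
  have hinv := hv.inv (by rw [hv₀]; exact div_ne_zero hden ht₀)
  rw [hv₀, classD_rhs_eq α ht₀ hden] at hinv
  rw [hu₀]
  simpa only [hu, one_div, Pi.inv_def] using hinv
end

section
/- Let y : ℝ → ℝ and t₀ ∈ ℝ with y(t₀) + t₀² ≠ 0. Suppose y has derivative −1/(y(t₀) + t₀²) at t₀ — that is, y solves the AIR equation with parameters s₂ = 0, s₁ = 0, s₀ = 1, r₂ = 1, r₁ = 0, r₀ = 0, a₃ = a₂ = a₁ = 0, a₀ = 1. Define u(t) = 1/(y(t) + t²). Then u has derivative u(t₀)³ − 2t₀·u(t₀)² at t₀. Hence Liouville's Class 2 equation y' = y³ − 2xy² is a member of the AIR class. -/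
theorem HasDerivAt.one_div_add_sq {𝕜 : Type*} [NontriviallyNormedField 𝕜] {y : 𝕜 → 𝕜}
    {y' t₀ : 𝕜} (hy : HasDerivAt y y' t₀) (hden : y t₀ + t₀ ^ 2 ≠ 0) :
    HasDerivAt (fun t => 1 / (y t + t ^ 2)) (-(y' + 2 * t₀) * (1 / (y t₀ + t₀ ^ 2)) ^ 2) t₀ := by
  have hsum : HasDerivAt (fun t => y t + t ^ 2) (y' + 2 * t₀) t₀ := by
    simpa using hy.fun_add (hasDerivAt_pow 2 t₀)
  simp only [one_div, inv_pow]
  exact (hsum.fun_inv hden).congr_deriv (by ring)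

-- Along the AIR equation `y' = -1/(y + t²) = -u`, hence `u' = -(y' + 2t)u² = u³ - 2tu²`.
/-- Liouville's Class 2 equation `y' = y³ − 2xy²` is a member of the AIR class:
it is obtained from the AIR equation with parameters
`s₂ = 0, s₁ = 0, s₀ = 1, r₂ = 1, r₁ = 0, r₀ = 0, a₃ = a₂ = a₁ = 0, a₀ = 1`
by the change of variables `{x = t, y = 1/u − t²}`, i.e. `u = 1/(y + t²)`. -/
theorem class2_member_of_AIR
    (y : ℝ → ℝ) (t₀ : ℝ)
    (hden : y t₀ + t₀ ^ 2 ≠ 0)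
    (hy : HasDerivAt y (-1 / (y t₀ + t₀ ^ 2)) t₀)
    (u : ℝ → ℝ) (hu : u = fun t => 1 / (y t + t ^ 2)) :
    HasDerivAt u ((u t₀) ^ 3 - 2 * t₀ * (u t₀) ^ 2) t₀ := by
  subst hu
  exact (hy.one_div_add_sq hden).congr_deriv (by ring)
end

section
/- Let a, b, c, α, β, γ ∈ ℝ, let y : ℝ → ℝ, and let t₀ ∈ ℝ. Set D(t) = αt² + βt + γ and N(t) = at² + bt + c, and suppose D(t₀) ≠ 0, (αt₀² + βt₀ + γ)·y(t₀) + at₀² + bt₀ + c ≠ 0, and y has derivative 1/((αt₀² + βt₀ + γ)·y(t₀) + at₀² + bt₀ + c) at t₀ — that is, y solves the AIR equation with s₂ = α, s₁ = β, s₀ = γ, r₂ = a, r₁ = b, r₀ = c, a₃ = a₂ = a₁ = 0, a₀ = −1. Define u(t) = 1/(y(t) + N(t)/D(t)). Then u has derivative −u(t₀)³/D(t₀) − ((2at₀ + b)·D(t₀) − N(t₀)·(2αt₀ + β))/D(t₀)² · u(t₀)² at t₀; that is, u satisfies Appell's equation y' = −y³/(αx² + βx + γ) − (d/dx)[(ax²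 + bx + c)/(αx² + βx + γ)]·y². Hence Appell's general parameterized equation is a member of the AIR class. -/
/-! With `w = y + N/D`, the AIR equation reads `y' = 1/(D w)`, so `w' = 1/(D w) + (N/D)'`;
differentiating `u = 1/w` gives `u' = -w'/w² = -u³/D - (N/D)' u²`. -/

theorem hasDerivAt_quadratic (p q r t : ℝ) :
    HasDerivAt (fun t => p * t ^ 2 + q * t + r) (2 * p * t + q) t := by
  refine ((((hasDerivAt_pow 2 t).const_mul p).add
    ((hasDerivAt_id t).const_mul q)).add_const r).congr_deriv ?_
  norm_num
  ring

theorem hasDerivAt_one_div_add_of_hasDerivAt_eq_one_div {y f : ℝ → ℝ} {d f' t₀ : ℝ}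
    (hy : HasDerivAt y (1 / (d * (y t₀ + f t₀))) t₀) (hf : HasDerivAt f f' t₀)
    (hw : y t₀ + f t₀ ≠ 0) :
    HasDerivAt (fun t => 1 / (y t + f t))
      (-(1 / (y t₀ + f t₀)) ^ 3 / d - f' * (1 / (y t₀ + f t₀)) ^ 2) t₀ := by
  simp only [one_div] at hy ⊢
  refine ((hy.add hf).inv hw).congr_deriv ?_
  rw [Pi.add_apply]
  generalize y t₀ + f t₀ = w
  ring

/-- Appell's general parameterized equation
`y' = −y³/(αx² + βx + γ) − (d/dx)[(ax² + bx + c)/(αx² + βx + γ)]·y²`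
is a member of the AIR class: it is obtained from the AIR equation with parameters
`s₂ = α, s₁ = β, s₀ = γ, r₂ = a, r₁ = b, r₀ = c, a₃ = a₂ = a₁ = 0, a₀ = −1`
by the change of variables `{x = t, y = 1/u − (at² + bt + c)/(αt² + βt + γ)}`. -/
theorem general_appell_member_of_AIR
    (a b c α β γ : ℝ) (y : ℝ → ℝ) (t₀ : ℝ)
    (D N : ℝ → ℝ)
    (hD : D = fun t => α * t ^ 2 + β * t + γ)
    (hN : N = fun t => a * t ^ 2 + b * t + c)
    (hD0 : D t₀ ≠ 0)
    (hden : (α * t₀ ^ 2 + β * t₀ + γ) * y t₀ + a * t₀ ^ 2 + b * t₀ + c ≠ 0)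
    (hy : HasDerivAt y
      (1 / ((α * t₀ ^ 2 + β * t₀ + γ) * y t₀ + a * t₀ ^ 2 + b * t₀ + c)) t₀)
    (u : ℝ → ℝ) (hu : u = fun t => 1 / (y t + N t / D t)) :
    HasDerivAt u
      (-(u t₀) ^ 3 / D t₀ -
        ((2 * a * t₀ + b) * D t₀ - N t₀ * (2 * α * t₀ + β)) / (D t₀) ^ 2 *
          (u t₀) ^ 2) t₀ := by
  have hDN : D t₀ * (y t₀ + N t₀ / D t₀) =
      (α * t₀ ^ 2 + β * t₀ + γ) * y t₀ + a * t₀ ^ 2 + b * t₀ + c := by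
    rw [mul_add, mul_div_cancel₀ _ hD0]
    subst hD hN
    ring
  have hND : HasDerivAt (fun t => N t / D t)
      (((2 * a * t₀ + b) * D t₀ - N t₀ * (2 * α * t₀ + β)) / (D t₀) ^ 2) t₀ := by
    subst hD hN
    exact (hasDerivAt_quadratic a b c t₀).div (hasDerivAt_quadratic α β γ t₀) hD0
  subst hu
  exact hasDerivAt_one_div_add_of_hasDerivAt_eq_one_div (by rwa [hDN]) hND
    (right_ne_zero_of_mul (hDN ▸ hden))
end

section
/- Let v : ℝ → ℝ and s₀ ∈ ℝ, and set x₀ = 2s₀. Suppose x₀³ − 2·v(x₀)·x₀² ≠ 0, s₀ − v(2s₀) ≠ 0, and v has derivative 1/(x₀³ − 2·v(x₀)·x₀²) at x₀ — that is, v solves the equation obtained from Liouville's Class 2 equation y' = y³ − 2xy² by the inverse transformation {x ↔ y}. Define w(s) = 1/(s − v(2s)). Then w has derivative w(s₀)³/(4s₀²) − w(s₀)² at s₀. Hence Liouville's Class 3 equation y' = y³/(4x²) − y² can be obtained from Class 2 by changing {x ↔ y} and then applying the change of variables {x = 2t, y = −1/u + t}; it is therefore a member of the AIA class. -/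
/-!
Under `x = 2s` the denominator of the inverted Class 2 equation factors as
`x³ − 2vx² = 8s²(s − v(2s))`, so `g(s) = s − v(2s)` satisfies the Riccati-type equation
`g' = 1 − 1/(4s²g)`. The reciprocal `w = 1/g` then has `w' = −g'/g² = w³/(4s²) − w²`,
which is Liouville's Class 3 equation.
-/

noncomputable def liouvilleClass2Inverse (x y : ℝ) : ℝ := 1 / (x ^ 3 - 2 * y * x ^ 2)

noncomputable def liouvilleClass3 (x y : ℝ) : ℝ := y ^ 3 / (4 * x ^ 2) - y ^ 2

theorem liouvilleClass2Inverse_two_mul (s y : ℝ) :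
    liouvilleClass2Inverse (2 * s) y = 1 / (8 * s ^ 2 * (s - y)) := by
  unfold liouvilleClass2Inverse
  ring

theorem HasDerivAt.sub_comp_const_mul {v : ℝ → ℝ} {v' c s : ℝ} (hv : HasDerivAt v v' (c * s)) :
    HasDerivAt (fun t => t - v (c * t)) (1 - c * v') s := by
  have hcomp : HasDerivAt (fun t => v (c * t)) (v' * (c * 1)) s :=
    hv.comp s ((hasDerivAt_id' s).const_mul c)
  have hsub : HasDerivAt (fun t => t - v (c * t)) (1 - v' * (c * 1)) s :=
    (hasDerivAt_id' s).sub hcomp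
  rwa [mul_one, mul_comm] at hsub

theorem HasDerivAt.sub_comp_two_mul_of_liouvilleClass2Inverse {v : ℝ → ℝ} {s : ℝ}
    (hv : HasDerivAt v (liouvilleClass2Inverse (2 * s) (v (2 * s))) (2 * s)) :
    HasDerivAt (fun t => t - v (2 * t)) (1 - 1 / (4 * s ^ 2 * (s - v (2 * s)))) s := by
  convert hv.sub_comp_const_mul using 2
  rw [liouvilleClass2Inverse_two_mul]
  generalize s - v (2 * s) = g
  ring

theorem HasDerivAt.one_div_liouvilleClass3 {g : ℝ → ℝ} {s : ℝ}
    (hg : HasDerivAt g (1 - 1 / (4 * s ^ 2 * g s)) s) (hg₀ : g s ≠ 0) :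
    HasDerivAt (fun t => 1 / g t) (liouvilleClass3 s (1 / g s)) s := by
  have hinv : HasDerivAt (fun t => (g t)⁻¹) (-(1 - 1 / (4 * s ^ 2 * g s)) / g s ^ 2) s :=
    hg.inv hg₀
  convert hinv using 1
  · simp only [one_div]
  · unfold liouvilleClass3
    ring

theorem class3_from_class2_general
    (v : ℝ → ℝ) (s₀ : ℝ) (x₀ : ℝ) (hx₀ : x₀ = 2 * s₀)
    (h2 : s₀ - v (2 * s₀) ≠ 0)
    (hv : HasDerivAt v (1 / (x₀ ^ 3 - 2 * v x₀ * x₀ ^ 2)) x₀)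
    (w : ℝ → ℝ) (hw : w = fun s => 1 / (s - v (2 * s))) :
    HasDerivAt w ((w s₀) ^ 3 / (4 * s₀ ^ 2) - (w s₀) ^ 2) s₀ := by
  subst hx₀ hw
  exact (HasDerivAt.sub_comp_two_mul_of_liouvilleClass2Inverse hv).one_div_liouvilleClass3 h2

/-- Liouville's Class 3 equation `y' = y³/(4x²) − y²` can be obtained from Class 2
(`y' = y³ − 2xy²`) by changing `{x ↔ y}` — giving `y' = 1/(x³ − 2yx²)` — and then
applying the change of variables `{x = 2t, y = −1/u + t}`, i.e. `w(s) = 1/(s − v(2s))`;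
it is therefore a member of the AIA class. -/
theorem class3_from_class2
    (v : ℝ → ℝ) (s₀ : ℝ) (x₀ : ℝ) (hx₀ : x₀ = 2 * s₀)
    (h1 : x₀ ^ 3 - 2 * v x₀ * x₀ ^ 2 ≠ 0)
    (h2 : s₀ - v (2 * s₀) ≠ 0)
    (hv : HasDerivAt v (1 / (x₀ ^ 3 - 2 * v x₀ * x₀ ^ 2)) x₀)
    (w : ℝ → ℝ) (hw : w = fun s => 1 / (s - v (2 * s))) :
    HasDerivAt w ((w s₀) ^ 3 / (4 * s₀ ^ 2) - (w s₀) ^ 2) s₀ :=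
  class3_from_class2_general v s₀ x₀ hx₀ h2 hv w hw
end

section
/- Let y : ℝ → ℝ and t₀ ≠ 0, and set x₀ = −1/t₀, Y = y(x₀). Suppose y has derivative x₀²·Y³ − (2x₀ + 1)·Y² + Y at x₀ — that is, y solves the 1-parameter AIL representative u' = (α + x²)u³ − (2x + 1)u² + u with α = 0. Define u(t) = (y(−1/t) + t)/t². Then u has derivative u(t₀)³ − (t₀ + 1)·u(t₀)²/t₀ at t₀. Hence the Class 4 equation y' = y³ − (x + 1)y²/x, collected among the Abel examples of Kamke's book, is a member of the AIL class. -/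
/-!
Under `x = -1/t` the chain and quotient rules give
`u'(t) = (y'(x)/t² + 1 - 2t·u(t))/t²` for `u = (y(x) + t)/t²`; substituting the AIL right-hand
side for `y'(x)` and `y = t²u - t` then reduces, by field arithmetic, to `u³ - (t + 1)u²/t`.
-/

section

variable {𝕜 : Type*} [NontriviallyNormedField 𝕜]

theorem hasDerivAt_neg_one_div {t : 𝕜} (ht : t ≠ 0) :
    HasDerivAt (fun s : 𝕜 => -1 / s) (1 / t ^ 2) t :=
  ((hasDerivAt_const t (-1 : 𝕜)).div (hasDerivAt_id' t) ht).congr_deriv (by ring)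

theorem HasDerivAt.comp_neg_one_div_add_div_sq {y : 𝕜 → 𝕜} {y' t : 𝕜} (ht : t ≠ 0)
    (hy : HasDerivAt y y' (-1 / t)) :
    HasDerivAt (fun s => (y (-1 / s) + s) / s ^ 2)
      ((y' / t ^ 2 + 1 - 2 * t * ((y (-1 / t) + t) / t ^ 2)) / t ^ 2) t := by
  have hnum : HasDerivAt (fun s => y (-1 / s) + s) (y' * (1 / t ^ 2) + 1) t :=
    (hy.comp t (hasDerivAt_neg_one_div ht)).add (hasDerivAt_id t)
  refine (hnum.div (hasDerivAt_pow 2 t) (pow_ne_zero 2 ht)).congr_deriv ?_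
  norm_num
  field_simp

theorem ail_rhs_transform_eq_class4_rhs {t : 𝕜} (ht : t ≠ 0) (Y : 𝕜) :
    (((-1 / t) ^ 2 * Y ^ 3 - (2 * (-1 / t) + 1) * Y ^ 2 + Y) / t ^ 2 + 1
        - 2 * t * ((Y + t) / t ^ 2)) / t ^ 2 =
      ((Y + t) / t ^ 2) ^ 3 - (t + 1) * ((Y + t) / t ^ 2) ^ 2 / t := by
  field_simp
  ring

end

/-- The Class 4 equation `y' = y³ − (x + 1)y²/x`, collected among the Abel examples of
Kamke's book, is a member of the AIL class: it is obtained from the 1-parameter AIL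
representative `u' = (α + x²)u³ − (2x + 1)u² + u` with `α = 0` by the change of
variables `{x = −1/t, y = t²u − t}`, i.e. `u = (y + t)/t²`. -/
theorem class4_member_of_AIL
    (y : ℝ → ℝ) (t₀ : ℝ) (ht₀ : t₀ ≠ 0)
    (x₀ Y : ℝ) (hx₀ : x₀ = -1 / t₀) (hY : Y = y x₀)
    (hy : HasDerivAt y (x₀ ^ 2 * Y ^ 3 - (2 * x₀ + 1) * Y ^ 2 + Y) x₀)
    (u : ℝ → ℝ) (hu : u = fun t => (y (-1 / t) + t) / t ^ 2) :
    HasDerivAt u ((u t₀) ^ 3 - (t₀ + 1) * (u t₀) ^ 2 / t₀) t₀ := by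
  subst hu hY hx₀
  exact (hy.comp_neg_one_div_add_div_sq ht₀).congr_deriv
    (ail_rhs_transform_eq_class4_rhs ht₀ _)
end
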